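/- arXiv:2201.09141 — 6 statements merged into one kernel-verified Lean document; each statement's English description precedes it below -/
import Mathlib

section
/- Let η = (η^1, η^2, η^3) be a coframe on a 3-manifold M with dη^3 = η^1 ∧ η^2, and let X be the vector field with η^1(X)=1, η^2(X)=η^3(X)=0 restricted to D = ker η^3. Let λ : M → ℝ be a positive smooth function with dλ = λ_1 η^1 + λ_2 η^2 + λ_3 η^3. Then the coframe η̃ with η̃^1 = λ η^1 - 2λ_2 η^3, η̃^2 = λ η^2 + 2λ_1 η^3, η̃^3 = λ² η^3 satisfies dη̃^3 = η̃^1 ∧ η̃^2. -/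
/-- Exterior derivative of a 1-form on an open subset of a normed space. -/
noncomputable def extD {E : Type*} [NormedAddCommGroup E] [NormedSpace ℝ E]
    (ω : E → E →L[ℝ] ℝ) (x u v : E) : ℝ :=
  fderiv ℝ (fun y => ω y v) x u - fderiv ℝ (fun y => ω y u) x v

/-- Wedge product of two 1-forms, evaluated on a pair of vectors. -/
noncomputable def wedge {E : Type*} [NormedAddCommGroup E] [NormedSpace ℝ E]
    (α β : E → E →L[ℝ] ℝ) (x u v : E) : ℝ :=
  α x u * β x v - α x v * β x u

/-- if `dη³ = η¹ ∧ η²`, `X` is the vector field with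
`η¹(X) = 1`, `η²(X) = η³(X) = 0`, and `λ > 0` has `dλ = λ₁η¹ + λ₂η² + λ₃η³`,
then the rescaled coframe `η̃¹ = λη¹ - 2λ₂η³`, `η̃² = λη² + 2λ₁η³`, `η̃³ = λ²η³`
satisfies `dη̃³ = η̃¹ ∧ η̃²`. -/
theorem stmt2 {E : Type*} [NormedAddCommGroup E] [NormedSpace ℝ E]
    (η1 η2 η3 : E → E →L[ℝ] ℝ) (X : E → E)
    (lam l1 l2 l3 : E → ℝ)
    (hη1 : ContDiff ℝ (⊤ : ℕ∞) η1) (hη2 : ContDiff ℝ (⊤ : ℕ∞) η2) (hη3 : ContDiff ℝ (⊤ : ℕ∞) η3)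
    (hcoframe : ∀ x, ∀ c1 c2 c3 : ℝ,
      (∀ v, c1 * η1 x v + c2 * η2 x v + c3 * η3 x v = 0) →
        c1 = 0 ∧ c2 = 0 ∧ c3 = 0)
    (hstr : ∀ x u v, extD η3 x u v = wedge η1 η2 x u v)
    (hX : ∀ x, η1 x (X x) = 1 ∧ η2 x (X x) = 0 ∧ η3 x (X x) = 0)
    (hlam : ContDiff ℝ (⊤ : ℕ∞) lam) (hpos : ∀ x, 0 < lam x)
    (hl1 : ContDiff ℝ (⊤ : ℕ∞) l1) (hl2 : ContDiff ℝ (⊤ : ℕ∞) l2) (hl3 : ContDiff ℝ (⊤ : ℕ∞) l3)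
    (hdlam : ∀ x u, fderiv ℝ lam x u =
      l1 x * η1 x u + l2 x * η2 x u + l3 x * η3 x u) :
    ∀ x u v,
      extD (fun y => (lam y * lam y) • η3 y) x u v =
        wedge (fun y => lam y • η1 y - (2 * l2 y) • η3 y)
              (fun y => lam y • η2 y + (2 * l1 y) • η3 y) x u v := by

  intro x u v
  have hdl : Differentiable ℝ lam := hlam.differentiable (by simp)
  have h3v : ∀ w : E, Differentiable ℝ (fun y => η3 y w) := fun w =>
    (hη3.clm_apply contDiff_const).differentiable (by simp)
  have key : ∀ w u' : E, fderiv ℝ (fun y => (lam y * lam y) * η3 y w) x u' =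
      (fderiv ℝ lam x u' * lam x + lam x * fderiv ℝ lam x u') * η3 x w
        + (lam x * lam x) * fderiv ℝ (fun y => η3 y w) x u' := by
    intro w u'
    rw [fderiv_fun_mul (c := fun y => lam y * lam y) ((hdl x).mul (hdl x)) (h3v w x), fderiv_fun_mul (hdl x) (hdl x)]
    simp; ring
  have hstr' := hstr x u v
  simp only [extD, wedge] at hstr' ⊢
  simp only [ContinuousLinearMap.smul_apply, smul_eq_mul, key,
    ContinuousLinearMap.sub_apply, ContinuousLinearMap.add_apply]
  rw [hdlam x u, hdlam x v]
  linear_combination (lam x * lam x) * hstr'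
end

section
/- Consider the Euler system Ṗ₁ = 2P₁P₂ - 3P₃P₄, Ṗ₂ = 2P₃(P₃ - 2P₁), Ṗ₃ = -2P₂(P₃ - 2P₁), Ṗ₄ = 0 on ℝ⁴. Then H = -2P₁² + 2P₁P₃ + 3P₂P₄ - (9/4)P₄² and r² = P₂² + P₃² are constants of motion. -/
section ChainRule

variable {P1 P2 P3 P4 : ℝ → ℝ} {t a b c d : ℝ}

theorem hasDerivAt_hamiltonian (H1 : HasDerivAt P1 a t) (H2 : HasDerivAt P2 b t)
    (H3 : HasDerivAt P3 c t) (H4 : HasDerivAt P4 d t) :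
    HasDerivAt (fun s => -(2 * (P1 s) ^ 2) + 2 * P1 s * P3 s + 3 * P2 s * P4 s
        - (9 / 4) * (P4 s) ^ 2)
      (-(4 * P1 t * a) + 2 * (a * P3 t + P1 t * c) + 3 * (b * P4 t + P2 t * d)
        - (9 / 2) * P4 t * d) t := by
  refine (((((H1.fun_pow 2).const_mul 2).fun_neg.fun_add ((H1.const_mul 2).fun_mul H3)).fun_add
    ((H2.const_mul 3).fun_mul H4)).fun_sub ((H4.fun_pow 2).const_mul (9 / 4))).congr_deriv ?_
  ring

theorem hasDerivAt_sq_add_sq (H2 : HasDerivAt P2 b t) (H3 : HasDerivAt P3 c t) :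
    HasDerivAt (fun s => (P2 s) ^ 2 + (P3 s) ^ 2) (2 * P2 t * b + 2 * P3 t * c) t := by
  refine ((H2.fun_pow 2).fun_add (H3.fun_pow 2)).congr_deriv ?_
  ring

end ChainRule

/-- along solutions of the Euler system
`Ṗ₁ = 2P₁P₂ - 3P₃P₄, Ṗ₂ = 2P₃(P₃ - 2P₁), Ṗ₃ = -2P₂(P₃ - 2P₁), Ṗ₄ = 0`,
the functions `H = -2P₁² + 2P₁P₃ + 3P₂P₄ - (9/4)P₄²` and `r² = P₂² + P₃²`
are constant. -/
theorem stmt11 (P1 P2 P3 P4 : ℝ → ℝ)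
    (hd1 : Differentiable ℝ P1) (hd2 : Differentiable ℝ P2)
    (hd3 : Differentiable ℝ P3) (hd4 : Differentiable ℝ P4)
    (h1 : ∀ t, deriv P1 t = 2 * P1 t * P2 t - 3 * P3 t * P4 t)
    (h2 : ∀ t, deriv P2 t = 2 * P3 t * (P3 t - 2 * P1 t))
    (h3 : ∀ t, deriv P3 t = -(2 * P2 t * (P3 t - 2 * P1 t)))
    (h4 : ∀ t, deriv P4 t = 0) :
    (∀ t, deriv (fun s => -(2 * (P1 s) ^ 2) + 2 * P1 s * P3 s + 3 * P2 s * P4 s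
        - (9 / 4) * (P4 s) ^ 2) t = 0) ∧
    (∀ t, deriv (fun s => (P2 s) ^ 2 + (P3 s) ^ 2) t = 0) := by
  refine ⟨fun t => ?_, fun t => ?_⟩
  · rw [(hasDerivAt_hamiltonian (hd1 t).hasDerivAt (hd2 t).hasDerivAt (hd3 t).hasDerivAt
      (hd4 t).hasDerivAt).deriv, h1, h2, h3, h4]
    ring
  · rw [(hasDerivAt_sq_add_sq (hd2 t).hasDerivAt (hd3 t).hasDerivAt).deriv, h2, h3]
    ring
end

section
/- If y = y(x) satisfies x² - 2axy + (a² + b²)y² = b identically for constants a, b with b > 0, then eliminating a, b from this equation and its first two x-derivatives yields y'' = (xy' - y)³. Concretely: if x - a(y + xy') + (a² + b²)yy' = 0 and 1 - a(2y' + xy'') + (a² + b²)((y')² + yy'') = 0 and x² - 2axy + (a²+b²)y² = b, then y'' = (xy' - y)³ (under suitable nondegeneracy, e.g. xy' - y ≠ 0 or generic position). -/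
/-- eliminating `a, b` from the Hooke-ellipse equation
`x² - 2axy + (a² + b²)y² = b` and its first two `x`-derivatives yields
`y'' = (xy' - y)³` (under the nondegeneracy `xy' - y ≠ 0`). -/
theorem stmt14 (a b x y y' y'' : ℝ) (hb : 0 < b)
    (he : x ^ 2 - 2 * a * x * y + (a ^ 2 + b ^ 2) * y ^ 2 = b)
    (he1 : x - a * (y + x * y') + (a ^ 2 + b ^ 2) * y * y' = 0)
    (he2 : 1 - a * (2 * y' + x * y'') + (a ^ 2 + b ^ 2) * (y' ^ 2 + y * y'') = 0)
    (hnd : x * y' - y ≠ 0) :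
    y'' = (x * y' - y) ^ 3 := by
  set A := y + x * y' with hA
  set B := y * y' with hB
  set C := 2 * y' + x * y'' with hC
  set D := y' ^ 2 + y * y'' with hD
  set det := A * D - B * C with hdet
  have h1 : a * det = x * D - B := by
    rw [hdet]; linear_combination (-D) * he1 + B * he2
  have h2 : (a ^ 2 + b ^ 2) * det = x * C - A := by
    rw [hdet]; linear_combination (-C) * he1 + A * he2
  have h0 : b * det = x ^ 2 * det - 2 * x * y * (x * D - B) + y ^ 2 * (x * C - A) := by
    linear_combination (-det) * he - 2 * x * y * h1 + y ^ 2 * h2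
  set E := x ^ 2 * det - 2 * x * y * (x * D - B) + y ^ 2 * (x * C - A) with hE
  have hkey : E ^ 2 = (x * C - A) * det - (x * D - B) ^ 2 := by
    linear_combination (-(E + b * det)) * h0 + det * h2 - (a * det + (x * D - B)) * h1
  have hF : (x * y' - y) ^ 3 * ((x * y' - y) ^ 3 - y'') = 0 := by
    rw [hE, hdet, hA, hB, hC, hD] at hkey
    linear_combination hkey
  rcases mul_eq_zero.mp hF with h | h
  · exact absurd (pow_eq_zero_iff (by norm_num) |>.mp h) hnd
  · linarith [sub_eq_zero.mp h]
end

section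
/- Consider the Euler system Ṗ₁ = 8P₂², Ṗ₂ = 2P₂(3P₄ - P₁), Ṗ₃ = 2P₁(P₃ - 2P₂) - 6P₃P₄, Ṗ₄ = 0 on ℝ⁴. Then k = P₁² + 4P₂P₃ and H = 2P₂P₃ - 2P₂² + 3P₁P₄ - (9/2)P₄² are constants of motion. -/
section ChainRule

variable {p₁ p₂ p₃ p₄ : ℝ → ℝ} {d₁ d₂ d₃ d₄ t : ℝ}

theorem hasDerivAt_sq_add_four_mul_mul (h₁ : HasDerivAt p₁ d₁ t) (h₂ : HasDerivAt p₂ d₂ t)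
    (h₃ : HasDerivAt p₃ d₃ t) :
    HasDerivAt (fun s => p₁ s ^ 2 + 4 * p₂ s * p₃ s)
      (2 * p₁ t * d₁ + 4 * (d₂ * p₃ t + p₂ t * d₃)) t := by
  refine ((h₁.pow 2).add ((h₂.const_mul 4).mul h₃)).congr_deriv ?_
  ring

theorem hasDerivAt_hamiltonian_s16 (h₁ : HasDerivAt p₁ d₁ t) (h₂ : HasDerivAt p₂ d₂ t)
    (h₃ : HasDerivAt p₃ d₃ t) (h₄ : HasDerivAt p₄ d₄ t) :
    HasDerivAt
      (fun s => 2 * p₂ s * p₃ s - 2 * p₂ s ^ 2 + 3 * p₁ s * p₄ s - (9 / 2) * p₄ s ^ 2)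
      (2 * (d₂ * p₃ t + p₂ t * d₃) - 4 * p₂ t * d₂ + 3 * (d₁ * p₄ t + p₁ t * d₄)
        - 9 * p₄ t * d₄) t := by
  refine ((((h₂.const_mul 2).mul h₃).sub ((h₂.pow 2).const_mul 2)).add
    ((h₁.const_mul 3).mul h₄)).sub ((h₄.pow 2).const_mul (9 / 2)) |>.congr_deriv ?_
  ring

end ChainRule

/-- along solutions of the Euler system
`Ṗ₁ = 8P₂², Ṗ₂ = 2P₂(3P₄ - P₁), Ṗ₃ = 2P₁(P₃ - 2P₂) - 6P₃P₄, Ṗ₄ = 0`,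
the functions `k = P₁² + 4P₂P₃` and `H = 2P₂P₃ - 2P₂² + 3P₁P₄ - (9/2)P₄²`
are constant. -/
theorem stmt16 (P1 P2 P3 P4 : ℝ → ℝ)
    (hd1 : Differentiable ℝ P1) (hd2 : Differentiable ℝ P2)
    (hd3 : Differentiable ℝ P3) (hd4 : Differentiable ℝ P4)
    (h1 : ∀ t, deriv P1 t = 8 * (P2 t) ^ 2)
    (h2 : ∀ t, deriv P2 t = 2 * P2 t * (3 * P4 t - P1 t))
    (h3 : ∀ t, deriv P3 t = 2 * P1 t * (P3 t - 2 * P2 t) - 6 * P3 t * P4 t)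
    (h4 : ∀ t, deriv P4 t = 0) :
    (∀ t, deriv (fun s => (P1 s) ^ 2 + 4 * P2 s * P3 s) t = 0) ∧
    (∀ t, deriv (fun s => 2 * P2 s * P3 s - 2 * (P2 s) ^ 2 + 3 * P1 s * P4 s
        - (9 / 2) * (P4 s) ^ 2) t = 0) := by
  have H1 t : HasDerivAt P1 (8 * P2 t ^ 2) t := h1 t ▸ (hd1 t).hasDerivAt
  have H2 t : HasDerivAt P2 (2 * P2 t * (3 * P4 t - P1 t)) t := h2 t ▸ (hd2 t).hasDerivAt
  have H3 t : HasDerivAt P3 (2 * P1 t * (P3 t - 2 * P2 t) - 6 * P3 t * P4 t) t :=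
    h3 t ▸ (hd3 t).hasDerivAt
  have H4 t : HasDerivAt P4 0 t := h4 t ▸ (hd4 t).hasDerivAt
  refine ⟨fun t => ?_, fun t => ?_⟩
  · rw [(hasDerivAt_sq_add_four_mul_mul (H1 t) (H2 t) (H3 t)).deriv]
    ring
  · rw [(hasDerivAt_hamiltonian_s16 (H1 t) (H2 t) (H3 t) (H4 t)).deriv]
    ring
end

section
/- With the substitution P₁ = b(c + sin φ), P₂ = (b/2) cos φ, P₃ = b(cos φ - p/2), P₄ = bc/3 (b, c constants), the Euler system Ṗ₁ = 8P₂², Ṗ₂ = 2P₂(3P₄ - P₁), Ṗ₃ = 2P₁(P₃ - 2P₂) - 6P₃P₄, Ṗ₄ = 0 together with the constraint H = 2P₂P₃ - 2P₂² + 3P₁P₄ - (9/2)P₄² = 0 is equivalent to φ̇ = 2b cos φ and p = cos φ + c(c + 2 sin φ) sec φ. Moreover k - 2H = b² where k = P₁² + 4P₂P₃. -/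
/-- under the substitution `P₁ = b(c + sin φ)`, `P₂ = (b/2) cos φ`,
`P₃ = b(cos φ - p/2)`, `P₄ = bc/3`, the Euler system
`Ṗ₁ = 8P₂², Ṗ₂ = 2P₂(3P₄ - P₁), Ṗ₃ = 2P₁(P₃ - 2P₂) - 6P₃P₄, Ṗ₄ = 0`
together with the null constraint `H = 2P₂P₃ - 2P₂² + 3P₁P₄ - (9/2)P₄² = 0`
is equivalent to `φ̇ = 2b cos φ` and `p = cos φ + c(c + 2 sin φ) sec φ`.
Moreover `k - 2H = b²` with `k = P₁² + 4P₂P₃`. -/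
theorem stmt17 (b c : ℝ) (hb : b ≠ 0) (P1 P2 P3 P4 φ p : ℝ → ℝ)
    (hφ : ContDiff ℝ (⊤ : ℕ∞) φ) (hp : Differentiable ℝ p)
    (hcos : ∀ t, Real.cos (φ t) ≠ 0)
    (h1 : ∀ t, P1 t = b * (c + Real.sin (φ t)))
    (h2 : ∀ t, P2 t = (b / 2) * Real.cos (φ t))
    (h3 : ∀ t, P3 t = b * (Real.cos (φ t) - p t / 2))
    (h4 : ∀ t, P4 t = b * c / 3) :
    ((∀ t, deriv P1 t = 8 * (P2 t) ^ 2 ∧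
           deriv P2 t = 2 * P2 t * (3 * P4 t - P1 t) ∧
           deriv P3 t = 2 * P1 t * (P3 t - 2 * P2 t) - 6 * P3 t * P4 t ∧
           deriv P4 t = 0 ∧
           2 * P2 t * P3 t - 2 * (P2 t) ^ 2 + 3 * P1 t * P4 t
             - (9 / 2) * (P4 t) ^ 2 = 0)
      ↔ (∀ t, deriv φ t = 2 * b * Real.cos (φ t) ∧
           p t = Real.cos (φ t)
             + c * (c + 2 * Real.sin (φ t)) / Real.cos (φ t))) ∧
    (∀ t, ((P1 t) ^ 2 + 4 * P2 t * P3 t)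
        - 2 * (2 * P2 t * P3 t - 2 * (P2 t) ^ 2 + 3 * P1 t * P4 t
            - (9 / 2) * (P4 t) ^ 2) = b ^ 2) := by
  have hφd : Differentiable ℝ φ := hφ.differentiable (by simp)
  have hsinφ : ∀ t, HasDerivAt (fun t => Real.sin (φ t))
      (Real.cos (φ t) * deriv φ t) t := fun t =>
    (Real.hasDerivAt_sin (φ t)).comp t (hφd t).hasDerivAt
  have hcosφ : ∀ t, HasDerivAt (fun t => Real.cos (φ t))
      (-Real.sin (φ t) * deriv φ t) t := fun t =>
    (Real.hasDerivAt_cos (φ t)).comp t (hφd t).hasDerivAt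
  have dP1 : ∀ t, deriv P1 t = b * (Real.cos (φ t) * deriv φ t) := by
    intro t
    rw [funext h1]
    exact (((hsinφ t).const_add c).const_mul b).deriv
  have dP2 : ∀ t, deriv P2 t = (b / 2) * (-Real.sin (φ t) * deriv φ t) := by
    intro t
    rw [funext h2]
    exact ((hcosφ t).const_mul (b / 2)).deriv
  have dP3 : ∀ t, deriv P3 t
      = b * (-Real.sin (φ t) * deriv φ t - deriv p t / 2) := by
    intro t
    rw [funext h3]
    exact (((hcosφ t).sub ((hp t).hasDerivAt.div_const 2)).const_mul b).deriv
  have dP4 : ∀ t, deriv P4 t = 0 := by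
    intro t
    rw [funext h4]
    simp
  constructor
  · constructor
    · intro h t
      have e1 := (h t).1
      have e5 := (h t).2.2.2.2
      rw [dP1 t, h2 t] at e1
      rw [h1 t, h2 t, h3 t, h4 t] at e5
      have hφt : deriv φ t = 2 * b * Real.cos (φ t) := by
        have h0 : b * Real.cos (φ t) ≠ 0 := mul_ne_zero hb (hcos t)
        apply mul_left_cancel₀ h0
        linear_combination e1
      refine ⟨hφt, ?_⟩
      have hX : p t * Real.cos (φ t)
          = Real.cos (φ t) ^ 2 + c ^ 2 + 2 * c * Real.sin (φ t) := by
        apply mul_left_cancel₀ (pow_ne_zero 2 hb)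
        linear_combination (-2 : ℝ) * e5
      field_simp [hcos t]
      linear_combination hX
    · intro h
      have hφ' : ∀ t, deriv φ t = 2 * b * Real.cos (φ t) := fun t => (h t).1
      have hX : ∀ t, p t * Real.cos (φ t)
          = Real.cos (φ t) ^ 2 + c ^ 2 + 2 * c * Real.sin (φ t) := by
        intro t
        rw [(h t).2]
        field_simp [hcos t]
        ring
      have hF : (fun t => p t * Real.cos (φ t))
          = fun t => Real.cos (φ t) ^ 2 + c ^ 2 + 2 * c * Real.sin (φ t) :=
        funext hX
      have hdp : ∀ t, deriv p t = 2 * b * p t * Real.sin (φ t)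
          + 4 * b * c * Real.cos (φ t)
          - 4 * b * Real.cos (φ t) * Real.sin (φ t) := by
        intro t
        have hl : HasDerivAt (fun t => p t * Real.cos (φ t))
            (deriv p t * Real.cos (φ t) + p t * (-Real.sin (φ t) * deriv φ t)) t :=
          (hp t).hasDerivAt.mul (hcosφ t)
        have hr : HasDerivAt
            (fun t => Real.cos (φ t) ^ 2 + c ^ 2 + 2 * c * Real.sin (φ t))
            (2 * Real.cos (φ t) ^ 1 * (-Real.sin (φ t) * deriv φ t)
              + 2 * c * (Real.cos (φ t) * deriv φ t)) t :=
          (((hcosφ t).pow 2).add_const (c ^ 2)).add ((hsinφ t).const_mul (2 * c))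
        have hpd := (hF ▸ hl).unique hr
        rw [hφ' t] at hpd
        apply mul_right_cancel₀ (hcos t)
        linear_combination hpd
      intro t
      refine ⟨?_, ?_, ?_, dP4 t, ?_⟩
      · rw [dP1 t, h2 t, hφ' t]; ring
      · rw [dP2 t, h2 t, h1 t, h4 t, hφ' t]; ring
      · rw [dP3 t, hdp t, h1 t, h2 t, h3 t, h4 t, hφ' t]; ring
      · rw [h1 t, h2 t, h3 t, h4 t]
        linear_combination (-(b ^ 2) / 2) * hX t
  · intro t
    rw [h1 t, h2 t, h3 t, h4 t]
    linear_combination (b ^ 2) * Real.sin_sq_add_cos_sq (φ t)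
end

section
/- Let r, h : ℝ → ℝ² be smooth curves satisfying r' = c sec(2τ) r + h and h' = -[1 + c(c + 2 sin 2τ) sec²(2τ)] r - c sec(2τ) h (where ' = d/dτ, c a real constant, cos 2τ ≠ 0). Then r'' = -r. -/
/-! With `a = c sec 2τ` one has `a' = 2c sin 2τ sec² 2τ`, so the coefficient of `r` in `h'` is
`-(1 + a² + a')`. For any scalar function `a`, substituting `h = r' - a r` into
`h' = -(1 + a² + a') r - a h` collapses to `r'' = -r`. -/

open Filter Topology

theorem deriv_deriv_eq_neg_of_eventuallyEq_smul_add {E : Type*} [NormedAddCommGroup E]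
    [NormedSpace ℝ E] {a : ℝ → ℝ} {a' τ : ℝ} {r w : ℝ → E} (ha : HasDerivAt a a' τ)
    (hr : DifferentiableAt ℝ r τ) (hw : DifferentiableAt ℝ w τ)
    (h1 : deriv r =ᶠ[𝓝 τ] fun t => a t • r t + w t)
    (h2 : deriv w τ = -((1 + a τ ^ 2 + a') • r τ) - a τ • w τ) :
    deriv (deriv r) τ = -r τ := by
  have hD : deriv (deriv r) τ = (a τ • deriv r τ + a' • r τ) + deriv w τ := by
    rw [h1.deriv_eq]
    exact ((ha.smul hr.hasDerivAt).add hw.hasDerivAt).deriv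
  rw [hD, h1.eq_of_nhds, h2]
  module

theorem hasDerivAt_div_cos_two_mul (c τ : ℝ) (hτ : Real.cos (2 * τ) ≠ 0) :
    HasDerivAt (fun t => c / Real.cos (2 * t))
      (2 * c * Real.sin (2 * τ) / Real.cos (2 * τ) ^ 2) τ := by
  have hcos : HasDerivAt (fun t => Real.cos (2 * t)) (-Real.sin (2 * τ) * 2) τ := by
    simpa using ((hasDerivAt_id τ).const_mul 2).cos
  exact ((hasDerivAt_const τ c).div hcos hτ).congr_deriv (by ring)

/-- if `r, h : ℝ → ℝ²` satisfy, on an open set where `cos 2τ ≠ 0`,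
`r' = c sec(2τ) r + h` and
`h' = -[1 + c(c + 2 sin 2τ) sec²(2τ)] r - c sec(2τ) h`, then `r'' = -r` there. -/
theorem stmt18 (c : ℝ) (S : Set ℝ) (hS : IsOpen S) (r w : ℝ → ℝ × ℝ)
    (hcos : ∀ τ ∈ S, Real.cos (2 * τ) ≠ 0)
    (hdr : ∀ τ ∈ S, DifferentiableAt ℝ r τ)
    (hdw : ∀ τ ∈ S, DifferentiableAt ℝ w τ)
    (h1 : ∀ τ ∈ S, deriv r τ = (c / Real.cos (2 * τ)) • r τ + w τ)
    (h2 : ∀ τ ∈ S, deriv w τ =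
      -((1 + c * (c + 2 * Real.sin (2 * τ)) / (Real.cos (2 * τ)) ^ 2) • r τ)
        - (c / Real.cos (2 * τ)) • w τ) :
    ∀ τ ∈ S, deriv (deriv r) τ = -r τ := by
  intro τ hτ
  refine deriv_deriv_eq_neg_of_eventuallyEq_smul_add
    (hasDerivAt_div_cos_two_mul c τ (hcos τ hτ)) (hdr τ hτ) (hdw τ hτ)
    (eventuallyEq_of_mem (hS.mem_nhds hτ) h1) ?_
  rw [h2 τ hτ]
  congr 3
  field_simp
  ring
end
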